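/- arXiv:1112.5472 — 5 statements merged into one kernel-verified Lean document; each statement's English description precedes it below -/
import Mathlib

section
/- Let P be a finite set of real numbers with at least 2 elements, G ⊆ P with min P ∈ G and max P ∈ G, and lvl : P → ℕ, satisfying the interval invariant. Let e be a real number with min P < e < max P and e ∉ G. For each i ∈ ℕ set e₁(i) = max{g ∈ G : lvl g ≤ i and g < e} and e₂(i) = min{g ∈ G : lvl g ≤ i and g > e} (both exist since min P and max P are guards of level 0). Suppose i is the least natural number for which the set {p ∈ P : lvl p ≤ i and e₁(i) < p < e₂(i)} is nonempty. Then e₁(i) and e₂(i) are consecutive guards of G and every point p ∈ P with e₁(i) < p < e₂(i) satisfies lvl p = i; that is, the gap (e₁(i), e₂(i)) is an interval at level i. -/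
/-- Two guards `g₁ < g₂` of `G` are consecutive if no element of `G` lies strictly
between them. -/
def ConsecutiveGuards (G : Finset ℝ) (g₁ g₂ : ℝ) : Prop :=
  g₁ ∈ G ∧ g₂ ∈ G ∧ g₁ < g₂ ∧ ∀ g ∈ G, ¬(g₁ < g ∧ g < g₂)

/-- The interval invariant for the set `P` of points, the set `G ⊆ P` of guards and the
level function `lvl`:
(i) every gap (open interval between consecutive guards) contains at least one point of
`P`, and all points of `P` inside a gap have the same level;
(ii) for every guard `g` other than `min P` and `max P`, the levels of the gap
immediately to the left of `g` and of the gap immediately to the right of `g` are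
distinct, and `lvl g` is the minimum of these two levels;
(iii) `lvl (min P) = lvl (max P) = 0`. -/
def IntervalInvariant (P G : Finset ℝ) (hP : P.Nonempty) (lvl : ℝ → ℕ) : Prop :=
  (∀ g₁ g₂, ConsecutiveGuards G g₁ g₂ →
      (∃ p ∈ P, g₁ < p ∧ p < g₂) ∧
      ∀ p ∈ P, ∀ q ∈ P, g₁ < p → p < g₂ → g₁ < q → q < g₂ → lvl p = lvl q) ∧
  (∀ g ∈ G, g ≠ P.min' hP → g ≠ P.max' hP →
      ∀ gl gr, ConsecutiveGuards G gl g → ConsecutiveGuards G g gr →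
      ∀ p ∈ P, ∀ q ∈ P, gl < p → p < g → g < q → q < gr →
        lvl p ≠ lvl q ∧ lvl g = min (lvl p) (lvl q)) ∧
  lvl (P.min' hP) = 0 ∧ lvl (P.max' hP) = 0

/-- If `p ∉ G` lies strictly between two guards `a < p < b`, then `p` lies in a gap
`(g₁, g₂)` of consecutive guards with `a ≤ g₁` and `g₂ ≤ b`. -/
lemma gap_around (G : Finset ℝ) (p a b : ℝ) (ha : a ∈ G) (hb : b ∈ G)
    (hap : a < p) (hpb : p < b) (hpG : p ∉ G) :
    ∃ g₁ g₂, ConsecutiveGuards G g₁ g₂ ∧ a ≤ g₁ ∧ g₁ < p ∧ p < g₂ ∧ g₂ ≤ b := by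
  have h₁ : (G.filter (fun g => g < p)).Nonempty :=
    ⟨a, Finset.mem_filter.mpr ⟨ha, hap⟩⟩
  have h₂ : (G.filter (fun g => p < g)).Nonempty :=
    ⟨b, Finset.mem_filter.mpr ⟨hb, hpb⟩⟩
  set g₁ := (G.filter (fun g => g < p)).max' h₁ with hg₁
  set g₂ := (G.filter (fun g => p < g)).min' h₂ with hg₂
  have hg₁m := Finset.max'_mem _ h₁
  have hg₂m := Finset.min'_mem _ h₂
  rw [Finset.mem_filter] at hg₁m hg₂m
  have ham : a ∈ G.filter (fun g => g < p) := Finset.mem_filter.mpr ⟨ha, hap⟩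
  have hbm : b ∈ G.filter (fun g => p < g) := Finset.mem_filter.mpr ⟨hb, hpb⟩
  refine ⟨g₁, g₂, ⟨hg₁m.1, hg₂m.1, lt_trans hg₁m.2 hg₂m.2, ?_⟩,
    Finset.le_max' _ a ham, hg₁m.2, hg₂m.2, Finset.min'_le _ b hbm⟩
  rintro g hg ⟨h1, h2⟩
  rcases lt_trichotomy g p with h | h | h
  · have hgm : g ∈ G.filter (fun g => g < p) := Finset.mem_filter.mpr ⟨hg, h⟩
    exact absurd (Finset.le_max' _ g hgm) (not_le.mpr h1)
  · exact hpG (h ▸ hg)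
  · have hgm : g ∈ G.filter (fun g => p < g) := Finset.mem_filter.mpr ⟨hg, h⟩
    exact absurd (Finset.min'_le _ g hgm) (not_le.mpr h2)

/-- A guard with some guard above it has a right neighbour, bounded by any guard above. -/
lemma consec_right (G : Finset ℝ) (g b : ℝ) (hg : g ∈ G) (hb : b ∈ G) (hgb : g < b) :
    ∃ gr, ConsecutiveGuards G g gr ∧ gr ≤ b := by
  have hbm : b ∈ G.filter (fun x => g < x) := Finset.mem_filter.mpr ⟨hb, hgb⟩
  have h : (G.filter (fun x => g < x)).Nonempty := ⟨b, hbm⟩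
  have hm := Finset.min'_mem _ h
  rw [Finset.mem_filter] at hm
  refine ⟨(G.filter (fun x => g < x)).min' h, ⟨hg, hm.1, hm.2, ?_⟩,
    Finset.min'_le _ b hbm⟩
  rintro x hx ⟨h1, h2⟩
  have hxm : x ∈ G.filter (fun x => g < x) := Finset.mem_filter.mpr ⟨hx, h1⟩
  exact absurd (Finset.min'_le _ x hxm) (not_le.mpr h2)

/-- A guard with some guard below it has a left neighbour, bounded by any guard below. -/
lemma consec_left (G : Finset ℝ) (g a : ℝ) (hg : g ∈ G) (ha : a ∈ G) (hag : a < g) :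
    ∃ gl, ConsecutiveGuards G gl g ∧ a ≤ gl := by
  have ham : a ∈ G.filter (fun x => x < g) := Finset.mem_filter.mpr ⟨ha, hag⟩
  have h : (G.filter (fun x => x < g)).Nonempty := ⟨a, ham⟩
  have hm := Finset.max'_mem _ h
  rw [Finset.mem_filter] at hm
  refine ⟨(G.filter (fun x => x < g)).max' h, ⟨hm.1, hg, hm.2, ?_⟩,
    Finset.le_max' _ a ham⟩
  rintro x hx ⟨h1, h2⟩
  have hxm : x ∈ G.filter (fun x => x < g) := Finset.mem_filter.mpr ⟨hx, h2⟩
  exact absurd (Finset.le_max' _ x hxm) (not_le.mpr h1)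

/-- Lemma 1, case of a non-guarding query point `e`: if `i` is the least level such
that some point of `P` of level at most `i` lies strictly between
`e₁ i = max {g ∈ G : lvl g ≤ i, g < e}` and `e₂ i = min {g ∈ G : lvl g ≤ i, g > e}`,
then `e₁ i` and `e₂ i` are consecutive guards and every point of `P` strictly between
them has level exactly `i`, i.e. `(e₁ i, e₂ i)` is an interval at level `i`. -/
theorem find_interval_nonguarding
    (P G : Finset ℝ) (hP : P.Nonempty) (hcard : 2 ≤ P.card)
    (hG : G ⊆ P) (hminG : P.min' hP ∈ G) (hmaxG : P.max' hP ∈ G)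
    (lvl : ℝ → ℕ) (hinv : IntervalInvariant P G hP lvl)
    (e : ℝ) (hemin : P.min' hP < e) (hemax : e < P.max' hP) (heG : e ∉ G)
    (e₁ e₂ : ℕ → ℝ)
    (he₁ : ∀ i, e₁ i ∈ G ∧ lvl (e₁ i) ≤ i ∧ e₁ i < e ∧
        ∀ g ∈ G, lvl g ≤ i → g < e → g ≤ e₁ i)
    (he₂ : ∀ i, e₂ i ∈ G ∧ lvl (e₂ i) ≤ i ∧ e < e₂ i ∧
        ∀ g ∈ G, lvl g ≤ i → e < g → e₂ i ≤ g)
    (i : ℕ)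
    (hi : ∃ p ∈ P, lvl p ≤ i ∧ e₁ i < p ∧ p < e₂ i)
    (hleast : ∀ j, (∃ p ∈ P, lvl p ≤ j ∧ e₁ j < p ∧ p < e₂ j) → i ≤ j) :
    ConsecutiveGuards G (e₁ i) (e₂ i) ∧
      ∀ p ∈ P, e₁ i < p → p < e₂ i → lvl p = i := by
  obtain ⟨hgaps, hguards, hlvlmin, hlvlmax⟩ := hinv
  obtain ⟨he₁G, he₁lvl, he₁e, he₁max⟩ := he₁ i
  obtain ⟨he₂G, he₂lvl, he₂e, he₂min⟩ := he₂ i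
  obtain ⟨p, hpP, hplvl, hp1, hp2⟩ := hi
  -- `min' ≤ e₁ i` and `e₂ i ≤ max'`
  have hminle : P.min' hP ≤ e₁ i :=
    he₁max _ hminG (by rw [hlvlmin]; exact Nat.zero_le i) hemin
  have hmaxge : e₂ i ≤ P.max' hP :=
    he₂min _ hmaxG (by rw [hlvlmax]; exact Nat.zero_le i) hemax
  -- No guard strictly inside `(e₁ i, e₂ i)` has level `≤ i`.
  have keyA : ∀ g ∈ G, e₁ i < g → g < e₂ i → i < lvl g := by
    intro g hg h1 h2
    by_contra h
    push_neg at h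
    rcases lt_trichotomy g e with hge | hge | hge
    · exact absurd (he₁max g hg h hge) (not_le.mpr h1)
    · exact heG (hge ▸ hg)
    · exact absurd (he₂min g hg h hge) (not_le.mpr h2)
  -- The witness point is not a guard.
  have hpG : p ∉ G := fun h => absurd hplvl (not_le.mpr (keyA p h hp1 hp2))
  -- Locate the gap `(g₁, g₂)` containing `p`.
  obtain ⟨g₁, g₂, hcons, hag₁, hg₁p, hpg₂, hg₂b⟩ :=
    gap_around G p (e₁ i) (e₂ i) he₁G he₂G hp1 hp2 hpG
  obtain ⟨hg₁G, hg₂G, hg₁₂, hnone⟩ := hcons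
  -- The right endpoint of the gap is `e₂ i`.
  have hg₂eq : g₂ = e₂ i := by
    by_contra h
    have h2 : g₂ < e₂ i := lt_of_le_of_ne hg₂b h
    have h1 : e₁ i < g₂ := lt_of_le_of_lt hag₁ hg₁₂
    have hlt : i < lvl g₂ := keyA g₂ hg₂G h1 h2
    have hne_min : g₂ ≠ P.min' hP := fun hh => by
      rw [hh] at h1; exact absurd hminle (not_le.mpr h1)
    have hne_max : g₂ ≠ P.max' hP := fun hh => by
      rw [hh] at h2; exact absurd hmaxge (not_le.mpr h2)
    obtain ⟨gr, hgr, _⟩ := consec_right G g₂ (P.max' hP) hg₂G hmaxG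
      (lt_of_lt_of_le h2 hmaxge)
    obtain ⟨q, hqP, hq1, hq2⟩ := (hgaps g₂ gr hgr).1
    have := (hguards g₂ hg₂G hne_min hne_max g₁ gr
      ⟨hg₁G, hg₂G, hg₁₂, hnone⟩ hgr p hpP q hqP hg₁p hpg₂ hq1 hq2).2
    have : lvl g₂ ≤ lvl p := by omega
    exact absurd (le_trans this hplvl) (not_le.mpr hlt)
  -- The left endpoint of the gap is `e₁ i`.
  have hg₁eq : g₁ = e₁ i := by
    by_contra h
    have h1 : e₁ i < g₁ := lt_of_le_of_ne hag₁ (Ne.symm h)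
    have h2 : g₁ < e₂ i := lt_of_lt_of_le hg₁₂ hg₂b
    have hlt : i < lvl g₁ := keyA g₁ hg₁G h1 h2
    have hne_min : g₁ ≠ P.min' hP := fun hh => by
      rw [hh] at h1; exact absurd hminle (not_le.mpr h1)
    have hne_max : g₁ ≠ P.max' hP := fun hh => by
      rw [hh] at h2; exact absurd hmaxge (not_le.mpr h2)
    obtain ⟨gl, hgl, _⟩ := consec_left G g₁ (P.min' hP) hg₁G hminG
      (lt_of_le_of_lt hminle h1)
    obtain ⟨q, hqP, hq1, hq2⟩ := (hgaps gl g₁ hgl).1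
    have := (hguards g₁ hg₁G hne_min hne_max gl g₂
      hgl ⟨hg₁G, hg₂G, hg₁₂, hnone⟩ q hqP p hpP hq1 hq2 hg₁p hpg₂).2
    have : lvl g₁ ≤ lvl p := by omega
    exact absurd (le_trans this hplvl) (not_le.mpr hlt)
  have hconsEq : ConsecutiveGuards G (e₁ i) (e₂ i) := by
    rw [← hg₁eq, ← hg₂eq]; exact ⟨hg₁G, hg₂G, hg₁₂, hnone⟩
  -- The witness point has level exactly `i`.
  have hpi : lvl p = i := by
    refine le_antisymm hplvl ?_
    apply hleast (lvl p)
    obtain ⟨he₁G', he₁lvl', he₁e', _⟩ := he₁ (lvl p)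
    obtain ⟨he₂G', he₂lvl', he₂e', _⟩ := he₂ (lvl p)
    refine ⟨p, hpP, le_refl _, ?_, ?_⟩
    · exact lt_of_le_of_lt (he₁max _ he₁G' (le_trans he₁lvl' hplvl) he₁e') hp1
    · exact lt_of_lt_of_le hp2 (he₂min _ he₂G' (le_trans he₂lvl' hplvl) he₂e')
  refine ⟨hconsEq, fun q hqP hq1 hq2 => ?_⟩
  rw [← hpi]
  exact (hgaps _ _ hconsEq).2 q hqP p hpP hq1 hq2 hp1 hp2
end

section
/- Let P be a finite set of real numbers with at least 2 elements, G ⊆ P with min P ∈ G and max P ∈ G, and lvl : P → ℕ, satisfying the interval invariant. Let e ∈ G \ {min P, max P}. For each i ∈ ℕ set e₁(i) = max{g ∈ G : lvl g ≤ i and g < e} and e₂(i) = min{g ∈ G : lvl g ≤ i and g > e} (both exist since min P and max P are guards of level 0). Suppose i is the least natural number for which the set {p ∈ P : lvl p ≤ i and e₁(i) < p < e₂(i)} is nonempty. Then at least one of the following holds: (a) e₁(i) and e are consecutive guards of G and every p ∈ P with e₁(i) < p < e satisfies lvl p = i, i.e. (e₁(i), e) is an interval at level i; or (b) e and e₂(i)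 are consecutive guards of G and every p ∈ P with e < p < e₂(i) satisfies lvl p = i, i.e. (e, e₂(i)) is an interval at level i. -/
/-- Largest guard strictly below `x`, if one exists. -/
lemma exists_maxBelow (G : Finset ℝ) (x : ℝ) (hx : ∃ g ∈ G, g < x) :
    ∃ g₁ ∈ G, g₁ < x ∧ ∀ g ∈ G, g < x → g ≤ g₁ := by
  classical
  obtain ⟨g, hg, hlt⟩ := hx
  have hne : (G.filter (fun y => y < x)).Nonempty :=
    ⟨g, Finset.mem_filter.mpr ⟨hg, hlt⟩⟩
  have hmem := (G.filter (fun y => y < x)).max'_mem hne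
  refine ⟨(G.filter (fun y => y < x)).max' hne,
    (Finset.mem_filter.mp hmem).1, (Finset.mem_filter.mp hmem).2, ?_⟩
  intro g' hg' hlt'
  exact Finset.le_max' (G.filter (fun y => y < x)) g' (Finset.mem_filter.mpr ⟨hg', hlt'⟩)

/-- Smallest guard strictly above `x`, if one exists. -/
lemma exists_minAbove (G : Finset ℝ) (x : ℝ) (hx : ∃ g ∈ G, x < g) :
    ∃ g₁ ∈ G, x < g₁ ∧ ∀ g ∈ G, x < g → g₁ ≤ g := by
  classical
  obtain ⟨g, hg, hlt⟩ := hx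
  have hne : (G.filter (fun y => x < y)).Nonempty :=
    ⟨g, Finset.mem_filter.mpr ⟨hg, hlt⟩⟩
  have hmem := (G.filter (fun y => x < y)).min'_mem hne
  refine ⟨(G.filter (fun y => x < y)).min' hne,
    (Finset.mem_filter.mp hmem).1, (Finset.mem_filter.mp hmem).2, ?_⟩
  intro g' hg' hlt'
  exact Finset.min'_le (G.filter (fun y => x < y)) g' (Finset.mem_filter.mpr ⟨hg', hlt'⟩)

/-- The level of a guard bounding a gap is at most the level of any point of the gap. -/
lemma lvl_guard_le (P G : Finset ℝ) (hP : P.Nonempty)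
    (hG : G ⊆ P) (hminG : P.min' hP ∈ G) (hmaxG : P.max' hP ∈ G)
    (lvl : ℝ → ℕ) (hinv : IntervalInvariant P G hP lvl)
    (g₁ g₂ : ℝ) (hc : ConsecutiveGuards G g₁ g₂)
    (p : ℝ) (hp : p ∈ P) (h1 : g₁ < p) (h2 : p < g₂) :
    lvl g₁ ≤ lvl p ∧ lvl g₂ ≤ lvl p := by
  obtain ⟨hg₁G, hg₂G, hlt, hno⟩ := hc
  constructor
  · by_cases hmin : g₁ = P.min' hP
    · rw [hmin, hinv.2.2.1]; exact Nat.zero_le _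
    · have hmax : g₁ ≠ P.max' hP := by
        intro h
        have := P.le_max' g₂ (hG hg₂G)
        rw [← h] at this; linarith
      have hex : ∃ g ∈ G, g < g₁ := ⟨P.min' hP, hminG,
        lt_of_le_of_ne (P.min'_le g₁ (hG hg₁G)) (Ne.symm hmin)⟩
      obtain ⟨gl, hglG, hgllt, hglmax⟩ := exists_maxBelow G g₁ hex
      have hcl : ConsecutiveGuards G gl g₁ :=
        ⟨hglG, hg₁G, hgllt, fun g hg h => absurd (hglmax g hg h.2) (not_le.mpr h.1)⟩
      obtain ⟨q, hq, hq1, hq2⟩ := (hinv.1 gl g₁ hcl).1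
      have hmineq := (hinv.2.1 g₁ hg₁G hmin hmax gl g₂ hcl ⟨hg₁G, hg₂G, hlt, hno⟩
        q hq p hp hq1 hq2 h1 h2).2
      rw [hmineq]; exact min_le_right _ _
  · by_cases hmax : g₂ = P.max' hP
    · rw [hmax, hinv.2.2.2]; exact Nat.zero_le _
    · have hmin : g₂ ≠ P.min' hP := by
        intro h
        have := P.min'_le g₁ (hG hg₁G)
        rw [← h] at this; linarith
      have hex : ∃ g ∈ G, g₂ < g := ⟨P.max' hP, hmaxG,
        lt_of_le_of_ne (P.le_max' g₂ (hG hg₂G)) hmax⟩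
      obtain ⟨gr, hgrG, hgrlt, hgrmin⟩ := exists_minAbove G g₂ hex
      have hcr : ConsecutiveGuards G g₂ gr :=
        ⟨hg₂G, hgrG, hgrlt, fun g hg h => absurd (hgrmin g hg h.1) (not_le.mpr h.2)⟩
      obtain ⟨q, hq, hq1, hq2⟩ := (hinv.1 g₂ gr hcr).1
      have hmineq := (hinv.2.1 g₂ hg₂G hmin hmax g₁ gr ⟨hg₁G, hg₂G, hlt, hno⟩ hcr
        p hp q hq h1 h2 hq1 hq2).2
      rw [hmineq]; exact min_le_left _ _

/-- Lemma 1, case of a guarding query point `e` (other than `min P` and `max P`): if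
`i` is the least level such that some point of `P` of level at most `i` lies strictly
between `e₁ i = max {g ∈ G : lvl g ≤ i, g < e}` and
`e₂ i = min {g ∈ G : lvl g ≤ i, g > e}`, then either `(e₁ i, e)` is an interval at
level `i` or `(e, e₂ i)` is an interval at level `i`. -/
theorem find_interval_guarding
    (P G : Finset ℝ) (hP : P.Nonempty) (hcard : 2 ≤ P.card)
    (hG : G ⊆ P) (hminG : P.min' hP ∈ G) (hmaxG : P.max' hP ∈ G)
    (lvl : ℝ → ℕ) (hinv : IntervalInvariant P G hP lvl)
    (e : ℝ) (heG : e ∈ G) (hemin : e ≠ P.min' hP) (hemax : e ≠ P.max' hP)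
    (e₁ e₂ : ℕ → ℝ)
    (he₁ : ∀ i, e₁ i ∈ G ∧ lvl (e₁ i) ≤ i ∧ e₁ i < e ∧
        ∀ g ∈ G, lvl g ≤ i → g < e → g ≤ e₁ i)
    (he₂ : ∀ i, e₂ i ∈ G ∧ lvl (e₂ i) ≤ i ∧ e < e₂ i ∧
        ∀ g ∈ G, lvl g ≤ i → e < g → e₂ i ≤ g)
    (i : ℕ)
    (hi : ∃ p ∈ P, lvl p ≤ i ∧ e₁ i < p ∧ p < e₂ i)
    (hleast : ∀ j, (∃ p ∈ P, lvl p ≤ j ∧ e₁ j < p ∧ p < e₂ j) → i ≤ j) :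
    (ConsecutiveGuards G (e₁ i) e ∧ ∀ p ∈ P, e₁ i < p → p < e → lvl p = i) ∨
    (ConsecutiveGuards G e (e₂ i) ∧ ∀ p ∈ P, e < p → p < e₂ i → lvl p = i) := by
  classical
  have heP : e ∈ P := hG heG
  have hminlt : P.min' hP < e := lt_of_le_of_ne (P.min'_le e heP) (Ne.symm hemin)
  have hltmax : e < P.max' hP := lt_of_le_of_ne (P.le_max' e heP) hemax
  obtain ⟨gl, hglG, hgle, hglmax⟩ := exists_maxBelow G e ⟨_, hminG, hminlt⟩
  obtain ⟨gr, hgrG, hegr, hgrmin⟩ := exists_minAbove G e ⟨_, hmaxG, hltmax⟩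
  have hcl : ConsecutiveGuards G gl e :=
    ⟨hglG, heG, hgle, fun g hg h => absurd (hglmax g hg h.2) (not_le.mpr h.1)⟩
  have hcr : ConsecutiveGuards G e gr :=
    ⟨heG, hgrG, hegr, fun g hg h => absurd (hgrmin g hg h.1) (not_le.mpr h.2)⟩
  obtain ⟨pl, hplP, hglpl, hple⟩ := (hinv.1 gl e hcl).1
  obtain ⟨pr, hprP, hepr, hprgr⟩ := (hinv.1 e gr hcr).1
  obtain ⟨hab, hlvle⟩ := hinv.2.1 e heG hemin hemax gl gr hcl hcr
    pl hplP pr hprP hglpl hple hepr hprgr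
  set a := lvl pl with ha
  set b := lvl pr with hb
  have hlvlgl : lvl gl ≤ a :=
    (lvl_guard_le P G hP hG hminG hmaxG lvl hinv gl e hcl pl hplP hglpl hple).1
  have hlvlgr : lvl gr ≤ b :=
    (lvl_guard_le P G hP hG hminG hmaxG lvl hinv e gr hcr pr hprP hepr hprgr).2
  have he₁gl : ∀ j, e₁ j ≤ gl := fun j => hglmax _ (he₁ j).1 (he₁ j).2.2.1
  have hgre₂ : ∀ j, gr ≤ e₂ j := fun j => hgrmin _ (he₂ j).1 (he₂ j).2.2.1
  -- i ≤ min a b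
  have him : i ≤ min a b := by
    rcases le_total a b with hle | hle
    · refine hleast (min a b) ⟨pl, hplP, ?_, ?_, ?_⟩
      · rw [min_eq_left hle]
      · exact lt_of_le_of_lt (he₁gl _) hglpl
      · exact lt_trans hple (he₂ _).2.2.1
    · refine hleast (min a b) ⟨pr, hprP, ?_, ?_, ?_⟩
      · rw [min_eq_right hle]
      · exact lt_trans (he₁ _).2.2.1 hepr
      · exact lt_of_lt_of_le hprgr (hgre₂ _)
  -- min a b ≤ i
  have hmi : min a b ≤ i := by
    by_contra hcon
    push_neg at hcon
    obtain ⟨p, hpP, hlvlp, hp1, hp2⟩ := hi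
    have hpe : p ≠ e := by
      intro heq
      rw [heq, hlvle] at hlvlp
      omega
    have hpnotG : p ∉ G := by
      intro hpG
      rcases lt_trichotomy p e with h1 | h2 | h3
      · exact absurd ((he₁ i).2.2.2 p hpG hlvlp h1) (not_le.mpr hp1)
      · exact hpe h2
      · exact absurd ((he₂ i).2.2.2 p hpG hlvlp h3) (not_le.mpr hp2)
    have hpmin : P.min' hP < p :=
      lt_of_le_of_ne (P.min'_le p hpP) (fun h => hpnotG (h ▸ hminG))
    have hpmax : p < P.max' hP :=
      lt_of_le_of_ne (P.le_max' p hpP) (fun h => hpnotG (h ▸ hmaxG))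
    obtain ⟨g', hg'G, hg'p, hg'max⟩ := exists_maxBelow G p ⟨_, hminG, hpmin⟩
    obtain ⟨g'', hg''G, hpg'', hg''min⟩ := exists_minAbove G p ⟨_, hmaxG, hpmax⟩
    have hcg : ConsecutiveGuards G g' g'' := by
      refine ⟨hg'G, hg''G, lt_trans hg'p hpg'', fun g hg h => ?_⟩
      rcases lt_trichotomy g p with h1 | h2 | h3
      · exact absurd (hg'max g hg h1) (not_le.mpr h.1)
      · exact hpnotG (h2 ▸ hg)
      · exact absurd (hg''min g hg h3) (not_le.mpr h.2)
    have hA := lvl_guard_le P G hP hG hminG hmaxG lvl hinv g' g'' hcg p hpP hg'p hpg''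
    rcases lt_or_gt_of_ne hpe with hlt | hgt
    · -- p < e
      have hg''e : g'' ≤ e := by
        by_contra hc'
        push_neg at hc'
        exact hcg.2.2.2 e heG ⟨lt_trans hg'p hlt, hc'⟩
      rcases eq_or_lt_of_le hg''e with heq | hlt2
      · -- g'' = e, so the gap (g', e) is (gl, e); p has level a
        have hgleq : gl ≤ g' := by
          by_contra hc'
          push_neg at hc'
          exact hcg.2.2.2 gl hglG ⟨hc', by rw [heq]; exact hgle⟩
        have hpa : lvl p = a :=
          (hinv.1 gl e hcl).2 p hpP pl hplP (lt_of_le_of_lt hgleq hg'p) hlt hglpl hple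
        rw [hpa] at hlvlp
        omega
      · -- g'' < e : g'' is a guard of small level left of e above e₁ i
        have hle' : g'' ≤ e₁ i := (he₁ i).2.2.2 g'' hg''G (le_trans hA.2 hlvlp) hlt2
        linarith
    · -- e < p
      have heg' : e ≤ g' := by
        by_contra hc'
        push_neg at hc'
        exact hcg.2.2.2 e heG ⟨hc', lt_trans hgt hpg''⟩
      rcases eq_or_lt_of_le heg' with heq | hlt2
      · have hgreq : g'' ≤ gr := by
          by_contra hc'
          push_neg at hc'
          exact hcg.2.2.2 gr hgrG ⟨by rw [← heq]; exact hegr, hc'⟩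
        have hpb : lvl p = b :=
          (hinv.1 e gr hcr).2 p hpP pr hprP hgt (lt_of_lt_of_le hpg'' hgreq) hepr hprgr
        rw [hpb] at hlvlp
        omega
      · have hle' : e₂ i ≤ g' := (he₂ i).2.2.2 g' hg'G (le_trans hA.1 hlvlp) hlt2
        linarith
  have hieq : i = min a b := le_antisymm him hmi
  rcases lt_or_gt_of_ne hab with hab' | hab'
  · -- a < b : left interval
    left
    have hma : min a b = a := min_eq_left hab'.le
    have hglei : gl ≤ e₁ i :=
      (he₁ i).2.2.2 gl hglG (by rw [hieq, hma]; exact hlvlgl) hgle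
    have heq : e₁ i = gl := le_antisymm (he₁gl i) hglei
    constructor
    · rw [heq]; exact hcl
    · intro p hpP h1 h2
      rw [heq] at h1
      have := (hinv.1 gl e hcl).2 p hpP pl hplP h1 h2 hglpl hple
      rw [this, hieq.trans hma, ha]
  · -- b < a : right interval
    right
    have hmb : min a b = b := min_eq_right hab'.le
    have hgrei : e₂ i ≤ gr :=
      (he₂ i).2.2.2 gr hgrG (by rw [hieq, hmb]; exact hlvlgr) hegr
    have heq : e₂ i = gr := le_antisymm hgrei (hgre₂ i)
    constructor
    · rw [heq]; exact hcr
    · intro p hpP h1 h2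
      rw [heq] at h2
      have := (hinv.1 e gr hcr).2 p hpP pr hprP h1 h2 hepr hprgr
      rw [this, hieq.trans hmb, hb]
end

section
/- Let P be a finite set of real numbers with at least 2 elements, G ⊆ P with min P ∈ G and max P ∈ G, and lvl : P → ℕ, satisfying the interval invariant. Let e be a real number with min P < e < max P and e ∉ G. For each i ∈ ℕ set e₁(i) = max{g ∈ G : lvl g ≤ i and g < e} and e₂(i) = min{g ∈ G : lvl g ≤ i and g > e}. Suppose i is the least natural number for which the set {p ∈ P : lvl p ≤ i and e₁(i) < p < e₂(i)} is nonempty. Then the predecessor of e in P, namely max{x ∈ P : x < e}, equals the maximum of the set {e₁(i)} ∪ {p ∈ P : lvl p = i and p < e}. -/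
/-- Around any non-guard point that has guards on both sides there is a gap. -/
lemma gap_around_s2 (G : Finset ℝ) (x : ℝ) (hx : x ∉ G)
    (h1 : ∃ g ∈ G, g < x) (h2 : ∃ g ∈ G, x < g) :
    ∃ g₁ g₂, ConsecutiveGuards G g₁ g₂ ∧ g₁ < x ∧ x < g₂ := by
  obtain ⟨a, haG, hax⟩ := h1
  obtain ⟨b, hbG, hxb⟩ := h2
  have hAne : (G.filter (· < x)).Nonempty := ⟨a, Finset.mem_filter.mpr ⟨haG, hax⟩⟩
  have hBne : (G.filter (x < ·)).Nonempty := ⟨b, Finset.mem_filter.mpr ⟨hbG, hxb⟩⟩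
  set g₁ := (G.filter (· < x)).max' hAne with hg₁
  set g₂ := (G.filter (x < ·)).min' hBne with hg₂
  have hg₁mem := Finset.mem_filter.mp ((G.filter (· < x)).max'_mem hAne)
  have hg₂mem := Finset.mem_filter.mp ((G.filter (x < ·)).min'_mem hBne)
  refine ⟨g₁, g₂, ⟨hg₁mem.1, hg₂mem.1, hg₁mem.2.trans hg₂mem.2, ?_⟩, hg₁mem.2, hg₂mem.2⟩
  intro g hgG hc
  rcases lt_trichotomy g x with h | h | h
  · exact absurd (Finset.le_max' (G.filter (· < x)) g (Finset.mem_filter.mpr ⟨hgG, h⟩)) (not_le.mpr hc.1)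
  · exact hx (h ▸ hgG)
  · exact absurd (Finset.min'_le (G.filter (x < ·)) g (Finset.mem_filter.mpr ⟨hgG, h⟩)) (not_le.mpr hc.2)

/-- An interior guard has level at most the level of any point in its right gap. -/
lemma lvl_guard_le_right (P G : Finset ℝ) (hP : P.Nonempty) (lvl : ℝ → ℕ)
    (hG : G ⊆ P) (hminG : P.min' hP ∈ G)
    (hinv : IntervalInvariant P G hP lvl)
    (g gr p : ℝ) (hg : g ∈ G) (hgmin : g ≠ P.min' hP) (hgmax : g ≠ P.max' hP)
    (hcons : ConsecutiveGuards G g gr) (hp : p ∈ P) (h1 : g < p) (h2 : p < gr) :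
    lvl g ≤ lvl p := by
  have hminlt : P.min' hP < g := lt_of_le_of_ne (P.min'_le g (hG hg)) (Ne.symm hgmin)
  have hAne : (G.filter (· < g)).Nonempty :=
    ⟨P.min' hP, Finset.mem_filter.mpr ⟨hminG, hminlt⟩⟩
  set gl := (G.filter (· < g)).max' hAne with hgl
  have hglmem := Finset.mem_filter.mp ((G.filter (· < g)).max'_mem hAne)
  have hconsl : ConsecutiveGuards G gl g := by
    refine ⟨hglmem.1, hg, hglmem.2, ?_⟩
    intro h hh hc
    exact absurd (Finset.le_max' (G.filter (· < g)) h (Finset.mem_filter.mpr ⟨hh, hc.2⟩)) (not_le.mpr hc.1)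
  obtain ⟨⟨q, hq, hq1, hq2⟩, _⟩ := hinv.1 gl g hconsl
  have := (hinv.2.1 g hg hgmin hgmax gl gr hconsl hcons q hq p hp hq1 hq2 h1 h2).2
  rw [this]; exact min_le_right _ _

/-- An interior guard has level at most the level of any point in its left gap. -/
lemma lvl_guard_le_left (P G : Finset ℝ) (hP : P.Nonempty) (lvl : ℝ → ℕ)
    (hG : G ⊆ P) (hmaxG : P.max' hP ∈ G)
    (hinv : IntervalInvariant P G hP lvl)
    (gl g p : ℝ) (hg : g ∈ G) (hgmin : g ≠ P.min' hP) (hgmax : g ≠ P.max' hP)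
    (hcons : ConsecutiveGuards G gl g) (hp : p ∈ P) (h1 : gl < p) (h2 : p < g) :
    lvl g ≤ lvl p := by
  have hmaxgt : g < P.max' hP := lt_of_le_of_ne (P.le_max' g (hG hg)) hgmax
  have hBne : (G.filter (g < ·)).Nonempty :=
    ⟨P.max' hP, Finset.mem_filter.mpr ⟨hmaxG, hmaxgt⟩⟩
  set gr := (G.filter (g < ·)).min' hBne with hgr
  have hgrmem := Finset.mem_filter.mp ((G.filter (g < ·)).min'_mem hBne)
  have hconsr : ConsecutiveGuards G g gr := by
    refine ⟨hg, hgrmem.1, hgrmem.2, ?_⟩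
    intro h hh hc
    exact absurd (Finset.min'_le (G.filter (g < ·)) h (Finset.mem_filter.mpr ⟨hh, hc.1⟩)) (not_le.mpr hc.2)
  obtain ⟨⟨q, hq, hq1, hq2⟩, _⟩ := hinv.1 g gr hconsr
  have := (hinv.2.1 g hg hgmin hgmax gl gr hcons hconsr p hp q hq h1 h2 hq1 hq2).2
  rw [this]; exact min_le_left _ _

/-- Correctness of the predecessor search: if `i` is the least level such that some
point of `P` of level at most `i` lies strictly between
`e₁ i = max {g ∈ G : lvl g ≤ i, g < e}` and `e₂ i = min {g ∈ G : lvl g ≤ i, g > e}`,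
then the predecessor `max {x ∈ P : x < e}` of `e` in `P` equals the maximum of the
set `{e₁ i} ∪ {p ∈ P : lvl p = i ∧ p < e}`. -/
theorem predecessor_correct
    (P G : Finset ℝ) (hP : P.Nonempty) (hcard : 2 ≤ P.card)
    (hG : G ⊆ P) (hminG : P.min' hP ∈ G) (hmaxG : P.max' hP ∈ G)
    (lvl : ℝ → ℕ) (hinv : IntervalInvariant P G hP lvl)
    (e : ℝ) (hemin : P.min' hP < e) (hemax : e < P.max' hP) (heG : e ∉ G)
    (e₁ e₂ : ℕ → ℝ)
    (he₁ : ∀ i, e₁ i ∈ G ∧ lvl (e₁ i) ≤ i ∧ e₁ i < e ∧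
        ∀ g ∈ G, lvl g ≤ i → g < e → g ≤ e₁ i)
    (he₂ : ∀ i, e₂ i ∈ G ∧ lvl (e₂ i) ≤ i ∧ e < e₂ i ∧
        ∀ g ∈ G, lvl g ≤ i → e < g → e₂ i ≤ g)
    (i : ℕ)
    (hi : ∃ p ∈ P, lvl p ≤ i ∧ e₁ i < p ∧ p < e₂ i)
    (hleast : ∀ j, (∃ p ∈ P, lvl p ≤ j ∧ e₁ j < p ∧ p < e₂ j) → i ≤ j) :
    (P.filter (fun x => x < e)).max'
        ⟨P.min' hP, Finset.mem_filter.mpr ⟨P.min'_mem hP, hemin⟩⟩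
      = (insert (e₁ i) (P.filter fun p => lvl p = i ∧ p < e)).max'
          (Finset.insert_nonempty _ _) := by
  obtain ⟨he₁G, he₁lvl, he₁e, he₁max⟩ := he₁ i
  obtain ⟨he₂G, he₂lvl, he₂e, he₂min⟩ := he₂ i
  set M := (P.filter (fun x => x < e)).max'
      ⟨P.min' hP, Finset.mem_filter.mpr ⟨P.min'_mem hP, hemin⟩⟩ with hMdef
  have hMmem := Finset.mem_filter.mp ((P.filter (fun x => x < e)).max'_mem
      ⟨P.min' hP, Finset.mem_filter.mpr ⟨P.min'_mem hP, hemin⟩⟩)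
  have hMP : M ∈ P := hMmem.1
  have hMe : M < e := hMmem.2
  have hle : ∀ x ∈ P, x < e → x ≤ M := fun x hx hxe =>
    Finset.le_max' (P.filter (fun x => x < e)) x (Finset.mem_filter.mpr ⟨hx, hxe⟩)
  have he₁M : e₁ i ≤ M := hle _ (hG he₁G) he₁e
  -- all elements of the right-hand side set are ≤ M
  have hTle : ∀ t ∈ insert (e₁ i) (P.filter fun p => lvl p = i ∧ p < e), t ≤ M := by
    intro t ht
    rcases Finset.mem_insert.mp ht with h | h
    · exact h ▸ he₁M
    · obtain ⟨htP, _, hte⟩ := Finset.mem_filter.mp h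
      exact hle t htP hte
  -- key: M is in the right-hand side set
  have key : M ∈ insert (e₁ i) (P.filter fun p => lvl p = i ∧ p < e) := by
    by_cases hMe₁ : M = e₁ i
    · rw [hMe₁]; exact Finset.mem_insert_self _ _
    have hMgt : e₁ i < M := lt_of_le_of_ne he₁M (fun h => hMe₁ h.symm)
    -- Step 1 : i ≤ lvl M
    have hstep1 : i ≤ lvl M := by
      by_contra hcon
      push_neg at hcon
      obtain ⟨hG', hlvl', hlt', _⟩ := he₁ (lvl M)
      have h1 : e₁ (lvl M) < M :=
        lt_of_le_of_lt (he₁max _ hG' (hlvl'.trans hcon.le) hlt') hMgt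
      have h2 : M < e₂ (lvl M) := hMe.trans (he₂ (lvl M)).2.2.1
      exact absurd (hleast (lvl M) ⟨M, hMP, le_refl _, h1, h2⟩) (not_le.mpr hcon)
    -- Observation : every guard strictly between e₁ i and e₂ i has level > i
    have obs : ∀ g ∈ G, e₁ i < g → g < e₂ i → i < lvl g := by
      intro g hg ha hb
      by_contra hcon
      push_neg at hcon
      rcases lt_trichotomy g e with h | h | h
      · exact absurd (he₁max g hg hcon h) (not_le.mpr ha)
      · exact heG (h ▸ hg)
      · exact absurd (he₂min g hg hcon h) (not_le.mpr hb)
    -- Step 2 : lvl M ≤ i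
    obtain ⟨p, hpP, hplvl, hpe₁, hpe₂⟩ := hi
    have hpG : p ∉ G := fun h =>
      absurd hplvl (not_le.mpr (obs p h hpe₁ hpe₂))
    have hminlep : P.min' hP < p := lt_of_le_of_lt (P.min'_le _ (hG he₁G)) hpe₁
    have hmaxgep : p < P.max' hP := lt_of_lt_of_le hpe₂ (P.le_max' _ (hG he₂G))
    obtain ⟨g₁, g₂, hcons, hg₁p, hpg₂⟩ :=
      gap_around_s2 G p hpG ⟨P.min' hP, hminG, hminlep⟩ ⟨P.max' hP, hmaxG, hmaxgep⟩
    obtain ⟨hg₁G, hg₂G, hg₁g₂, hnog⟩ := hcons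
    have hstep2 : lvl M ≤ i := by
      by_cases hc2 : g₂ ≤ e
      · -- g₂ is a guard in (e₁ i, e₂ i) of small level : contradiction
        exfalso
        have hg₂e : g₂ < e := lt_of_le_of_ne hc2 (fun h => heG (h ▸ hg₂G))
        have hg₂min : g₂ ≠ P.min' hP := by
          have : P.min' hP < g₂ := lt_of_le_of_lt (P.min'_le _ (hG hg₁G)) hg₁g₂
          exact fun h => absurd h.symm (ne_of_lt this)
        have hg₂max : g₂ ≠ P.max' hP := ne_of_lt (hg₂e.trans hemax)
        have hle' : lvl g₂ ≤ lvl p :=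
          lvl_guard_le_left P G hP lvl hG hmaxG hinv g₁ g₂ p hg₂G hg₂min hg₂max
            ⟨hg₁G, hg₂G, hg₁g₂, hnog⟩ hpP hg₁p hpg₂
        exact absurd (hle'.trans hplvl) (not_le.mpr (obs g₂ hg₂G (hpe₁.trans hpg₂) (hg₂e.trans he₂e)))
      by_cases hc1 : e ≤ g₁
      · -- g₁ is a guard in (e₁ i, e₂ i) of small level : contradiction
        exfalso
        have hg₁e : e < g₁ := lt_of_le_of_ne hc1 (fun h => heG (h ▸ hg₁G))
        have hg₁min : g₁ ≠ P.min' hP := by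
          have : P.min' hP < g₁ := hemin.trans hg₁e
          exact fun h => absurd h.symm (ne_of_lt this)
        have hg₁max : g₁ ≠ P.max' hP :=
          ne_of_lt (lt_of_lt_of_le hg₁g₂ (P.le_max' _ (hG hg₂G)))
        have hle' : lvl g₁ ≤ lvl p :=
          lvl_guard_le_right P G hP lvl hG hminG hinv g₁ g₂ p hg₁G hg₁min hg₁max
            ⟨hg₁G, hg₂G, hg₁g₂, hnog⟩ hpP hg₁p hpg₂
        exact absurd (hle'.trans hplvl)
          (not_le.mpr (obs g₁ hg₁G (he₁e.trans hg₁e) (hg₁p.trans hpe₂)))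
      -- main case : g₁ < e < g₂, so the gap (g₁, g₂) contains e
      push_neg at hc1 hc2
      have hg₁M : g₁ ≤ M := hle g₁ (hG hg₁G) hc1
      rcases eq_or_lt_of_le hg₁M with heq | hlt
      · -- M = g₁ is a guard whose right gap contains p
        have hMmin : M ≠ P.min' hP := by
          have : P.min' hP < M := lt_of_le_of_lt (P.min'_le _ (hG he₁G)) hMgt
          exact fun h => absurd h.symm (ne_of_lt this)
        have hMmax : M ≠ P.max' hP := ne_of_lt (hMe.trans hemax)
        have := lvl_guard_le_right P G hP lvl hG hminG hinv M g₂ p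
          (heq ▸ hg₁G) hMmin hMmax
          (heq ▸ (⟨hg₁G, hg₂G, hg₁g₂, hnog⟩ : ConsecutiveGuards G g₁ g₂)) hpP
          (heq ▸ hg₁p) hpg₂
        exact this.trans hplvl
      · -- M lies inside the gap (g₁, g₂), hence has the same level as p
        have := (hinv.1 g₁ g₂ ⟨hg₁G, hg₂G, hg₁g₂, hnog⟩).2 M hMP p hpP
          hlt (hMe.trans hc2) hg₁p hpg₂
        exact this ▸ hplvl
    exact Finset.mem_insert_of_mem
      (Finset.mem_filter.mpr ⟨hMP, le_antisymm hstep2 hstep1, hMe⟩)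
  exact le_antisymm (Finset.le_max' _ M key) (Finset.max'_le _ _ _ hTle)
end

section
/- Let P be a finite set of real numbers with at least 2 elements, G ⊆ P with min P ∈ G and max P ∈ G, and lvl : P → ℕ, satisfying the interval invariant. Then for every i ∈ ℕ, the number of guards other than min P and max P whose level is i is at most twice the number of non-guarding points of level i; that is, |{g ∈ G \ {min P, max P} : lvl g = i}| ≤ 2 · |{p ∈ P \ G : lvl p = i}|. -/
/-- The nearest guard strictly below `g` is consecutive with `g`. -/
lemma consec_left_s3 (G : Finset ℝ) (g : ℝ) (hg : g ∈ G)
    (h : (G.filter (· < g)).Nonempty) :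
    ConsecutiveGuards G ((G.filter (· < g)).max' h) g := by
  have hm := Finset.max'_mem _ h
  rw [Finset.mem_filter] at hm
  refine ⟨hm.1, hg, hm.2, ?_⟩
  rintro x hx ⟨h1, h2⟩
  have hx' : x ∈ G.filter (· < g) := Finset.mem_filter.mpr ⟨hx, h2⟩
  exact absurd (Finset.le_max' _ x hx') (not_le.mpr h1)

/-- The nearest guard strictly above `g` is consecutive with `g`. -/
lemma consec_right_s3 (G : Finset ℝ) (g : ℝ) (hg : g ∈ G)
    (h : (G.filter (g < ·)).Nonempty) :
    ConsecutiveGuards G g ((G.filter (g < ·)).min' h) := by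
  have hm := Finset.min'_mem _ h
  rw [Finset.mem_filter] at hm
  refine ⟨hg, hm.1, hm.2, ?_⟩
  rintro x hx ⟨h1, h2⟩
  have hx' : x ∈ G.filter (g < ·) := Finset.mem_filter.mpr ⟨hx, h1⟩
  exact absurd (Finset.min'_le _ x hx') (not_le.mpr h2)

/-- Observation O.1 (combinatorial part): for every level `i`, the number of guards
other than `min P` and `max P` of level `i` is at most twice the number of
non-guarding points of level `i`. -/
theorem guards_le_two_mul_nonguards
    (P G : Finset ℝ) (hP : P.Nonempty) (hcard : 2 ≤ P.card)
    (hG : G ⊆ P) (hminG : P.min' hP ∈ G) (hmaxG : P.max' hP ∈ G)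
    (lvl : ℝ → ℕ) (hinv : IntervalInvariant P G hP lvl) :
    ∀ i : ℕ,
      ((G \ {P.min' hP, P.max' hP}).filter fun g => lvl g = i).card
        ≤ 2 * ((P \ G).filter fun p => lvl p = i).card := by
  classical
  intro i
  set m := P.min' hP with hm
  set M := P.max' hP with hM
  set s := (G \ {m, M}).filter (fun g => lvl g = i) with hsdef
  set t := (P \ G).filter (fun p => lvl p = i) with htdef
  -- the relation: `g` is an endpoint of the gap containing `p`
  set r : ℝ → ℝ → Prop := fun g p =>
    (∃ gl, ConsecutiveGuards G gl g ∧ gl < p ∧ p < g) ∨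
    (∃ gr, ConsecutiveGuards G g gr ∧ g < p ∧ p < gr) with hrdef
  -- facts about membership of s
  have hs_mem : ∀ g ∈ s, g ∈ G ∧ g ≠ m ∧ g ≠ M ∧ lvl g = i := by
    intro g hg
    rw [hsdef, Finset.mem_filter, Finset.mem_sdiff, Finset.mem_insert,
      Finset.mem_singleton] at hg
    push_neg at hg
    exact ⟨hg.1.1, hg.1.2.1, hg.1.2.2, hg.2⟩
  have key : s.card * 1 ≤ t.card * 2 := by
    apply Finset.card_mul_le_card_mul r
    · -- every guard in s is related to at least one point of t
      intro g hg
      obtain ⟨hgG, hgm, hgM, hgi⟩ := hs_mem g hg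
      have hgP : g ∈ P := hG hgG
      have hmg : m < g := lt_of_le_of_ne (P.min'_le g hgP) (Ne.symm hgm)
      have hgM' : g < M := lt_of_le_of_ne (P.le_max' g hgP) hgM
      have hne1 : (G.filter (· < g)).Nonempty :=
        ⟨m, Finset.mem_filter.mpr ⟨hminG, hmg⟩⟩
      have hne2 : (G.filter (g < ·)).Nonempty :=
        ⟨M, Finset.mem_filter.mpr ⟨hmaxG, hgM'⟩⟩
      set gl := (G.filter (· < g)).max' hne1 with hgl
      set gr := (G.filter (g < ·)).min' hne2 with hgr
      have hcl : ConsecutiveGuards G gl g := consec_left_s3 G g hgG hne1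
      have hcr : ConsecutiveGuards G g gr := consec_right_s3 G g hgG hne2
      obtain ⟨p, hpP, hglp, hpg⟩ := (hinv.1 gl g hcl).1
      obtain ⟨q, hqP, hgq, hqgr⟩ := (hinv.1 g gr hcr).1
      obtain ⟨hne, hmin⟩ := hinv.2.1 g hgG hgm hgM gl gr hcl hcr p hpP q hqP hglp hpg hgq hqgr
      rw [hgi] at hmin
      -- the witness: p or q, whichever has level i
      have hwit : ∃ w, w ∈ P ∧ lvl w = i ∧ r g w := by
        rcases min_cases (lvl p) (lvl q) with ⟨h1, _⟩ | ⟨h1, _⟩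
        · exact ⟨p, hpP, by omega, Or.inl ⟨gl, hcl, hglp, hpg⟩⟩
        · exact ⟨q, hqP, by omega, Or.inr ⟨gr, hcr, hgq, hqgr⟩⟩
      obtain ⟨w, hwP, hwi, hrw⟩ := hwit
      have hwG : w ∉ G := by
        intro hwG
        rcases hrw with ⟨gl', hc, h1, h2⟩ | ⟨gr', hc, h1, h2⟩
        · exact hc.2.2.2 w hwG ⟨h1, h2⟩
        · exact hc.2.2.2 w hwG ⟨h1, h2⟩
      have hwt : w ∈ t := by
        rw [htdef, Finset.mem_filter, Finset.mem_sdiff]; exact ⟨⟨hwP, hwG⟩, hwi⟩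
      rw [Nat.one_le_iff_ne_zero, ← Nat.pos_iff_ne_zero, Finset.card_pos]
      exact ⟨w, (Finset.mem_bipartiteAbove r).mpr ⟨hwt, hrw⟩⟩
    · -- each point of t is related to at most 2 guards
      intro p hpt
      rw [htdef, Finset.mem_filter, Finset.mem_sdiff] at hpt
      obtain ⟨⟨hpP, hpG⟩, _⟩ := hpt
      have hmp : m < p := lt_of_le_of_ne (P.min'_le p hpP) (by rintro rfl; exact hpG hminG)
      have hpM : p < M := lt_of_le_of_ne (P.le_max' p hpP) (by rintro rfl; exact hpG hmaxG)
      have hne1 : (G.filter (· < p)).Nonempty :=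
        ⟨m, Finset.mem_filter.mpr ⟨hminG, hmp⟩⟩
      have hne2 : (G.filter (p < ·)).Nonempty :=
        ⟨M, Finset.mem_filter.mpr ⟨hmaxG, hpM⟩⟩
      set L := (G.filter (· < p)).max' hne1 with hL
      set R := (G.filter (p < ·)).min' hne2 with hR
      have hsub : s.bipartiteBelow r p ⊆ {L, R} := by
        intro g hg
        rw [Finset.mem_bipartiteBelow r] at hg
        obtain ⟨hgs, hrg⟩ := hg
        obtain ⟨hgG, _, _, _⟩ := hs_mem g hgs
        rw [Finset.mem_insert, Finset.mem_singleton]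
        rcases hrg with ⟨gl', hc, h1, h2⟩ | ⟨gr', hc, h1, h2⟩
        · -- p is in the gap (gl', g), so g = R
          right
          have hgR : g ∈ G.filter (p < ·) := Finset.mem_filter.mpr ⟨hgG, h2⟩
          have h3 : R ≤ g := Finset.min'_le _ g hgR
          rcases eq_or_lt_of_le h3 with h4 | h4
        
          · exact h4.symm
          · exfalso
            have hRmem := Finset.min'_mem _ hne2
            rw [Finset.mem_filter] at hRmem
            exact hc.2.2.2 R hRmem.1 ⟨lt_trans h1 hRmem.2, h4⟩
        · -- p is in the gap (g, gr'), so g = L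
          left
          have hgL : g ∈ G.filter (· < p) := Finset.mem_filter.mpr ⟨hgG, h1⟩
          have h3 : g ≤ L := Finset.le_max' _ g hgL
          rcases eq_or_lt_of_le h3 with h4 | h4
          · exact h4
          · exfalso
            have hLmem := Finset.max'_mem _ hne1
            rw [Finset.mem_filter] at hLmem
            exact hc.2.2.2 L hLmem.1 ⟨h4, lt_trans hLmem.2 h2⟩
      calc (s.bipartiteBelow r p).card ≤ ({L, R} : Finset ℝ).card :=
            Finset.card_le_card hsub
        _ ≤ 2 := Finset.card_insert_le _ _ |>.trans (by simp)
  omega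
end

section
/- Let c = 5. For all natural numbers d, k, i, H, C with d ≥ 1, k ≥ 1, i ≥ 1, if 380 + 20d < 2^(2^(k−1)), H + C ≥ 4c·2^(2^(i+k)) − c, and H ≤ (c−1) · ( d·2^(i+k) + 2·2^(2^(i+k)) + ∑_{j=0}^{i−1} ( (4 + 2d + 8c)·2^(2^(j+k)) + 2c ) ), then C > 0. -/
/-!
Write `M = 2^2^(i+k-1)`, so that `2^2^(i+k) = M²`. The terms `2^2^(j+k)` at least double
from one index to the next, so their sum over `j < i` is at most twice the last one, `2M`;
moreover `2^(i+k)` and `i` are at most `M`. Hence the bound on `H` is at most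
`8M² + (392 + 20d)M`, and since `M ≥ 2^2^(k-1) > 380 + 20d` this is below
`20M² - 5 ≤ H + C`, which forces `C > 0`.
-/

open Finset

section DoublingSum

variable {α : Type*} [AddCommMonoid α] [PartialOrder α] [IsOrderedAddMonoid α]
  [CanonicallyOrderedAdd α]

theorem sum_range_le_of_add_self_le {a : ℕ → α} (ha : ∀ j, a j + a j ≤ a (j + 1)) (i : ℕ) :
    ∑ j ∈ range i, a j ≤ a i := by
  induction i with
  | zero => simp
  | succ i ih =>
    rw [sum_range_succ]
    exact (add_le_add_left ih _).trans (ha i)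

theorem sum_range_succ_le_add_self_of_add_self_le {a : ℕ → α}
    (ha : ∀ j, a j + a j ≤ a (j + 1)) (i : ℕ) :
    ∑ j ∈ range (i + 1), a j ≤ a i + a i := by
  rw [sum_range_succ]
  exact add_le_add_left (sum_range_le_of_add_self_le ha i) _

end DoublingSum

theorem two_pow_two_pow_succ (m : ℕ) : 2 ^ 2 ^ (m + 1) = 2 ^ 2 ^ m * 2 ^ 2 ^ m := by
  rw [pow_succ, pow_mul, sq]

theorem two_pow_two_pow_add_self_le (m : ℕ) : 2 ^ 2 ^ m + 2 ^ 2 ^ m ≤ 2 ^ 2 ^ (m + 1) := by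
  have h : 2 ≤ 2 ^ 2 ^ m := Nat.le_self_pow (Nat.two_pow_pos m).ne' 2
  rw [two_pow_two_pow_succ]
  nlinarith

theorem two_pow_succ_le_two_pow_two_pow (m : ℕ) : 2 ^ (m + 1) ≤ 2 ^ 2 ^ m :=
  Nat.pow_le_pow_right two_pos Nat.lt_two_pow_self

theorem sum_two_pow_two_pow_le (k i : ℕ) :
    ∑ j ∈ range (i + 1), 2 ^ 2 ^ (j + k) ≤ 2 * 2 ^ 2 ^ (i + k) := by
  rw [two_mul]
  refine sum_range_succ_le_add_self_of_add_self_le (a := fun j ↦ 2 ^ 2 ^ (j + k)) (fun j ↦ ?_) i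
  simpa only [Nat.add_right_comm j 1 k] using two_pow_two_pow_add_self_le (j + k)

theorem helping_bound_lt (d M H : ℕ) (hM : 381 + 20 * d ≤ M)
    (hH : H ≤ 4 * (d * M + 2 * (M * M) + ((44 + 2 * d) * (2 * M) + 10 * M))) :
    H + 5 < 20 * (M * M) := by
  nlinarith

theorem climbing_points_exist_general (c : ℕ) (hc : c = 5) (d k i H C : ℕ)
    (hi : 1 ≤ i)
    (hcond : 380 + 20 * d < 2 ^ 2 ^ (k - 1))
    (hHC : 4 * c * 2 ^ 2 ^ (i + k) - c ≤ H + C)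
    (hH : H ≤ (c - 1) * (d * 2 ^ (i + k) + 2 * 2 ^ 2 ^ (i + k) +
        ∑ j ∈ Finset.range i, ((4 + 2 * d + 8 * c) * 2 ^ 2 ^ (j + k) + 2 * c))) :
    0 < C := by
  subst hc
  obtain ⟨i, rfl⟩ := Nat.exists_eq_add_of_le' hi
  set M := 2 ^ 2 ^ (i + k)
  have hN : 2 ^ 2 ^ (i + 1 + k) = M * M := by rw [Nat.add_right_comm, two_pow_two_pow_succ]
  have hA : 2 ^ (i + 1 + k) ≤ M := by
    rw [Nat.add_right_comm]; exact two_pow_succ_le_two_pow_two_pow _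
  have hiM : i + 1 ≤ M :=
    (Nat.lt_two_pow_self.trans_le (Nat.pow_le_pow_right two_pos (by omega))).le.trans hA
  have hPM : 2 ^ 2 ^ (k - 1) ≤ M :=
    Nat.pow_le_pow_right two_pos (Nat.pow_le_pow_right two_pos (by omega))
  have hsum : ∑ j ∈ range (i + 1), ((4 + 2 * d + 8 * 5) * 2 ^ 2 ^ (j + k) + 2 * 5)
      ≤ (44 + 2 * d) * (2 * M) + 10 * M := by
    calc _ = (44 + 2 * d) * ∑ j ∈ range (i + 1), 2 ^ 2 ^ (j + k) + 10 * (i + 1) := by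
          rw [sum_add_distrib, ← mul_sum, sum_const, card_range, smul_eq_mul]; ring
      _ ≤ _ := by gcongr; exact sum_two_pow_two_pow_le k i
  have hHM : H ≤ 4 * (d * M + 2 * (M * M) + ((44 + 2 * d) * (2 * M) + 10 * M)) := by
    rw [hN] at hH
    refine hH.trans ?_
    gcongr
  have hHlt := helping_bound_lt d M H (by omega) hHM
  omega

/-- Correctness condition for shift-up at levels `i ≥ 1`: invariant I.9 together with
the bound on the number of helping points implies that there is at least one climbing
point. -/
theorem climbing_points_exist (c : ℕ) (hc : c = 5) (d k i H C : ℕ)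
    (hd : 1 ≤ d) (hk : 1 ≤ k) (hi : 1 ≤ i)
    (hcond : 380 + 20 * d < 2 ^ 2 ^ (k - 1))
    (hHC : 4 * c * 2 ^ 2 ^ (i + k) - c ≤ H + C)
    (hH : H ≤ (c - 1) * (d * 2 ^ (i + k) + 2 * 2 ^ 2 ^ (i + k) +
        ∑ j ∈ Finset.range i, ((4 + 2 * d + 8 * c) * 2 ^ 2 ^ (j + k) + 2 * c))) :
    0 < C :=
  climbing_points_exist_general c hc d k i H C hi hcond hHC hH
end
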